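/- Fix integers j ≥ 0 and 0 ≤ k ≤ j. The number of pairs (f, (f₁, f₂)) where f is a monic polynomial of degree j in 𝔽_q[t], f² = f₁ f₂ with f₁, f₂ monic and deg(f₁) = k, equals q^j (1 + (1 − q^{-1}) ⌊k/2⌋). -/

import Mathlib

open Polynomial UniqueFactorizationMonoid

namespace CSF

lemma ncard_sprod {α β : Type*} (s : Set α) (t : Set β) :
    (s ×ˢ t).ncard = s.ncard * t.ncard := by
  rw [← Nat.card_coe_set_eq, ← Nat.card_coe_set_eq, ← Nat.card_coe_set_eq,
    Nat.card_congr (Equiv.Set.prod s t), Nat.card_prod]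

lemma ncard_biUnion_range {α : Type*} (n : ℕ) (f : ℕ → Set α) (hfin : ∀ i, (f i).Finite)
    (hdisj : ∀ i j, i ≠ j → Disjoint (f i) (f j)) :
    (⋃ i ∈ Finset.range n, f i).ncard = ∑ i ∈ Finset.range n, (f i).ncard := by
  induction n with
  | zero => simp
  | succ n ih =>
    rw [Finset.sum_range_succ, ← ih,
      show (⋃ i ∈ Finset.range (n+1), f i) = (⋃ i ∈ Finset.range n, f i) ∪ f n from by
        simp [Finset.range_add_one, Set.iUnion_union_distrib, Set.union_comm]]
    refine Set.ncard_union_eq ?_ (Set.Finite.biUnion (Finset.range n).finite_toSet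
      (fun i _ => hfin i)) (hfin n)
    refine Set.disjoint_iUnion_left.mpr fun i => Set.disjoint_iUnion_left.mpr fun hi => ?_
    exact hdisj i n (Finset.mem_range.mp hi).ne

variable (Fq : Type*) [Field Fq]

def monicSet (n : ℕ) : Set Fq[X] := {f | f.Monic ∧ f.natDegree = n}

def sfSet (n : ℕ) : Set Fq[X] := {f | f.Monic ∧ Squarefree f ∧ f.natDegree = n}

variable [Fintype Fq]

lemma monicSet_eq (n : ℕ) :
    monicSet Fq n = (fun p => X ^ n + p) '' ((degreeLT Fq n : Submodule Fq Fq[X]) : Set Fq[X]) := by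
  ext f
  constructor
  · rintro ⟨hm, hd⟩
    refine ⟨f - X ^ n, ?_, by ring⟩
    rw [SetLike.mem_coe, mem_degreeLT]
    rcases n.eq_zero_or_pos with h0 | hpos
    · subst h0
      simp [hm.natDegree_eq_zero.mp hd]
    · apply lt_of_lt_of_le (degree_sub_lt ?_ hm.ne_zero ?_)
      · rw [degree_eq_natDegree hm.ne_zero, hd]
      · rw [degree_eq_natDegree hm.ne_zero, hd, degree_X_pow]
      · rw [hm.leadingCoeff, leadingCoeff_X_pow]
  · rintro ⟨p, hp, rfl⟩
    rw [SetLike.mem_coe, mem_degreeLT] at hp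
    have hlt : degree p < degree ((X : Fq[X]) ^ n) := by rwa [degree_X_pow]
    have hm : (X ^ n + p : Fq[X]).Monic := (monic_X_pow n).add_of_left hlt
    exact ⟨hm, by rw [natDegree_add_eq_left_of_degree_lt hlt, natDegree_X_pow]⟩

lemma degreeLT_finite (n : ℕ) :
    ((degreeLT Fq n : Submodule Fq Fq[X]) : Set Fq[X]).Finite := by
  have : Finite (degreeLT Fq n) := Finite.of_equiv _ (degreeLTEquiv Fq n).toEquiv.symm
  exact Set.toFinite _

lemma monicSet_finite (n : ℕ) : (monicSet Fq n).Finite := by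
  rw [monicSet_eq]
  exact (degreeLT_finite Fq n).image _

lemma sfSet_finite (n : ℕ) : (sfSet Fq n).Finite :=
  (monicSet_finite Fq n).subset fun f hf => ⟨hf.1, hf.2.2⟩

lemma ncard_monicSet (n : ℕ) : (monicSet Fq n).ncard = Fintype.card Fq ^ n := by
  rw [monicSet_eq, Set.ncard_image_of_injective _ (add_right_injective _),
    ← Nat.card_coe_set_eq]
  rw [show (((degreeLT Fq n : Submodule Fq Fq[X]) : Set Fq[X])) = ((degreeLT Fq n : Submodule Fq Fq[X]) : Set Fq[X]) from rfl]
  have := Nat.card_congr (degreeLTEquiv Fq n).toEquiv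
  simp only [Nat.card_eq_fintype_card] at this ⊢
  rw [show Nat.card ↑(↑(degreeLT Fq n) : Set Fq[X]) = Nat.card (degreeLT Fq n) from rfl, this]
  simp


section Alg
variable {Fq : Type*} [Field Fq]

section NF
variable [DecidableEq Fq]

lemma monic_sq_inj {f g : Fq[X]} (hf : f.Monic) (hg : g.Monic) (h : f ^ 2 = g ^ 2) : f = g := by
  have h0 : (f - g) * (f + g) = 0 := by linear_combination h
  rcases mul_eq_zero.mp h0 with h1 | h1
  · exact sub_eq_zero.mp h1
  · have hfg : f = -g := eq_neg_of_add_eq_zero_left h1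
    have hc : (1 : Fq) = -1 := by
      have := hf.leadingCoeff
      rw [hfg, leadingCoeff_neg, hg.leadingCoeff] at this
      exact this.symm
    have h2 : C (2 : Fq) = 0 := by
      rw [show (2 : Fq) = 0 from by linear_combination hc, map_zero]
    have h3 : f - g = -(C 2 * g) := by rw [hfg, map_ofNat]; ring
    rw [h2, zero_mul, neg_zero, sub_eq_zero] at h3
    exact h3

lemma eq_of_nf_eq {a c : Fq[X]} (ha : a.Monic) (hc : c.Monic)
    (h : normalizedFactors a = normalizedFactors c) : a = c := by
  classical
  refine eq_of_monic_of_associated ha hc ?_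
  exact ((prod_normalizedFactors ha.ne_zero).symm.trans (h ▸ prod_normalizedFactors hc.ne_zero))

lemma sf_decomp_unique {a b c d : Fq[X]} (ha : a.Monic) (hb : b.Monic) (hc : c.Monic)
    (hd : d.Monic) (hsa : Squarefree a) (hsc : Squarefree c)
    (h : a * b ^ 2 = c * d ^ 2) : a = c ∧ b = d := by
  classical
  have hE : normalizedFactors a + 2 • normalizedFactors b
      = normalizedFactors c + 2 • normalizedFactors d := by
    have := congrArg normalizedFactors h
    rwa [normalizedFactors_mul ha.ne_zero (pow_ne_zero 2 hb.ne_zero),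
      normalizedFactors_mul hc.ne_zero (pow_ne_zero 2 hd.ne_zero),
      normalizedFactors_pow, normalizedFactors_pow] at this
  have hac : a = c := by
    refine eq_of_nf_eq ha hc (Multiset.ext.mpr fun p => ?_)
    have h0 := congrArg (Multiset.count p) hE
    simp only [Multiset.count_add, Multiset.count_nsmul] at h0
    have h1 := Multiset.nodup_iff_count_le_one.mp
      ((squarefree_iff_nodup_normalizedFactors ha.ne_zero).mp hsa) p
    have h2 := Multiset.nodup_iff_count_le_one.mp
      ((squarefree_iff_nodup_normalizedFactors hc.ne_zero).mp hsc) p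
    omega
  subst hac
  exact ⟨rfl, monic_sq_inj hb hd (mul_left_cancel₀ ha.ne_zero h)⟩

lemma sf_eq_of_sq {a c e f : Fq[X]} (ha : a.Monic) (hc : c.Monic) (he : e ≠ 0) (hf : f ≠ 0)
    (hsa : Squarefree a) (hsc : Squarefree c) (h : a * c * e ^ 2 = f ^ 2) : a = c := by
  classical
  have hE : normalizedFactors a + normalizedFactors c + 2 • normalizedFactors e
      = 2 • normalizedFactors f := by
    have := congrArg normalizedFactors h
    rwa [normalizedFactors_mul (mul_ne_zero ha.ne_zero hc.ne_zero) (pow_ne_zero 2 he),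
      normalizedFactors_mul ha.ne_zero hc.ne_zero,
      normalizedFactors_pow, normalizedFactors_pow] at this
  refine eq_of_nf_eq ha hc (Multiset.ext.mpr fun p => ?_)
  have h0 := congrArg (Multiset.count p) hE
  simp only [Multiset.count_add, Multiset.count_nsmul] at h0
  have h1 := Multiset.nodup_iff_count_le_one.mp
    ((squarefree_iff_nodup_normalizedFactors ha.ne_zero).mp hsa) p
  have h2 := Multiset.nodup_iff_count_le_one.mp
    ((squarefree_iff_nodup_normalizedFactors hc.ne_zero).mp hsc) p
  omega

end NF

lemma exists_sf_decomp (n : ℕ) : ∀ f : Fq[X], f.natDegree = n → f.Monic →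
    ∃ a b : Fq[X], a.Monic ∧ b.Monic ∧ Squarefree a ∧ f = a * b ^ 2 := by
  induction n using Nat.strong_induction_on with
  | _ n ih =>
    intro f hdeg hf
    by_cases hsf : Squarefree f
    · exact ⟨f, 1, hf, monic_one, hsf, by ring⟩
    · rw [Squarefree] at hsf
      push_neg at hsf
      obtain ⟨x, hxdvd, hxu⟩ := hsf
      have hx0 : x ≠ 0 := by
        rintro rfl
        rw [zero_mul, zero_dvd_iff] at hxdvd
        exact hf.ne_zero hxdvd
      obtain ⟨p, hpirr, hpdvd⟩ := WfDvdMonoid.exists_irreducible_factor hxu hx0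
      have hpm : (p * C (p.leadingCoeff)⁻¹).Monic := monic_mul_leadingCoeff_inv hpirr.ne_zero
      set pm : Fq[X] := p * C (p.leadingCoeff)⁻¹ with hpm_def
      have hassoc : Associated p pm :=
        associated_mul_unit_right p _ (isUnit_C.mpr
          (inv_ne_zero (leadingCoeff_ne_zero.mpr hpirr.ne_zero)).isUnit)
      have hpmirr : Irreducible pm := hassoc.irreducible hpirr
      have hpmdvd : pm * pm ∣ f :=
        dvd_trans (mul_dvd_mul (hassoc.symm.dvd.trans hpdvd) (hassoc.symm.dvd.trans hpdvd)) hxdvd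
      obtain ⟨g, hg⟩ := hpmdvd
      have hgm : g.Monic := by
        have : (pm * pm * g).Monic := hg ▸ hf
        exact (hpm.mul hpm).of_mul_monic_left this
      have hdpos : 0 < pm.natDegree := hpmirr.natDegree_pos
      have hdeg_lt : g.natDegree < n := by
        have : f.natDegree = pm.natDegree + pm.natDegree + g.natDegree := by
          rw [hg, natDegree_mul (mul_ne_zero hpm.ne_zero hpm.ne_zero) hgm.ne_zero,
            natDegree_mul hpm.ne_zero hpm.ne_zero]
        omega
      obtain ⟨a, b, ham, hbm, hsa, hab⟩ := ih g.natDegree hdeg_lt g rfl hgm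
      exact ⟨a, pm * b, ham, hpm.mul hbm, hsa, by rw [hg, hab]; ring⟩

end Alg
section Count
variable (Fq : Type*) [Field Fq] [Fintype Fq]

lemma monic_biUnion (n : ℕ) :
    monicSet Fq n = (fun p : Fq[X] × Fq[X] => p.1 * p.2 ^ 2) ''
      (⋃ m ∈ Finset.range (n / 2 + 1), sfSet Fq (n - 2 * m) ×ˢ monicSet Fq m) := by
  ext f
  simp only [Set.mem_image, Set.mem_iUnion, Set.mem_prod, Finset.mem_range]
  constructor
  · rintro ⟨hm, hd⟩
    obtain ⟨a, b, ham, hbm, hsa, hab⟩ := exists_sf_decomp f.natDegree f rfl hm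
    have hdeg : f.natDegree = a.natDegree + 2 * b.natDegree := by
      rw [hab, natDegree_mul ham.ne_zero (pow_ne_zero 2 hbm.ne_zero), natDegree_pow]
    refine ⟨(a, b), ⟨b.natDegree, by omega, ⟨ham, hsa, ?_⟩, ⟨hbm, rfl⟩⟩, hab.symm⟩
    show a.natDegree = n - 2 * b.natDegree
    omega
  · rintro ⟨⟨a, b⟩, ⟨m, hm, ⟨ham, hsa, had⟩, ⟨hbm, hbd⟩⟩, rfl⟩
    refine ⟨ham.mul (hbm.pow 2), ?_⟩
    simp only
    rw [natDegree_mul ham.ne_zero (pow_ne_zero 2 hbm.ne_zero), natDegree_pow, had, hbd]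
    omega

lemma psi_injOn (n : ℕ) : Set.InjOn (fun p : Fq[X] × Fq[X] => p.1 * p.2 ^ 2)
    (⋃ m ∈ Finset.range (n / 2 + 1), sfSet Fq (n - 2 * m) ×ˢ monicSet Fq m) := by
  classical
  rintro ⟨a, b⟩ hab ⟨c, d⟩ hcd h
  simp only [Set.mem_iUnion, Set.mem_prod, Finset.mem_range] at hab hcd
  obtain ⟨m, _, ⟨ham, hsa, _⟩, hbm, _⟩ := hab
  obtain ⟨m', _, ⟨hcm, hsc, _⟩, hdm, _⟩ := hcd
  obtain ⟨h1, h2⟩ := sf_decomp_unique ham hbm hcm hdm hsa hsc h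
  simp [Prod.ext_iff, h1, h2]

lemma sum_sf (n : ℕ) :
    ∑ m ∈ Finset.range (n / 2 + 1), (sfSet Fq (n - 2 * m)).ncard * Fintype.card Fq ^ m
      = Fintype.card Fq ^ n := by
  classical
  rw [← ncard_monicSet Fq n, monic_biUnion,
    Set.ncard_image_of_injOn (psi_injOn Fq n),
    ncard_biUnion_range _ _ (fun i => (sfSet_finite Fq _).prod (monicSet_finite Fq _)) ?_]
  · exact Finset.sum_congr rfl fun m _ => by rw [ncard_sprod, ncard_monicSet]
  · intro i j hij
    rw [Set.disjoint_left]
    rintro ⟨a, b⟩ h1 h2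
    exact hij (h1.2.2.symm.trans h2.2.2)

lemma sfSet_zero : sfSet Fq 0 = {1} := by
  ext f
  constructor
  · rintro ⟨hm, _, hd⟩
    exact hm.natDegree_eq_zero.mp hd
  · rintro rfl
    exact ⟨monic_one, squarefree_one, natDegree_one⟩

lemma sfSet_one : sfSet Fq 1 = monicSet Fq 1 := by
  ext f
  constructor
  · rintro ⟨hm, _, hd⟩; exact ⟨hm, hd⟩
  · rintro ⟨hm, hd⟩
    refine ⟨hm, ?_, hd⟩
    exact (irreducible_of_degree_eq_one (by rw [degree_eq_natDegree hm.ne_zero, hd]; rfl)).squarefree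

lemma ncard_sfSet_zero : (sfSet Fq 0).ncard = 1 := by rw [sfSet_zero]; simp

lemma ncard_sfSet_one : (sfSet Fq 1).ncard = Fintype.card Fq := by
  rw [sfSet_one, ncard_monicSet, pow_one]

lemma ncard_sfSet_of_two_le {n : ℕ} (hn : 2 ≤ n) :
    (sfSet Fq n).ncard + Fintype.card Fq ^ (n - 1) = Fintype.card Fq ^ n := by
  have h1 := sum_sf Fq n
  rw [Finset.sum_range_succ'] at h1
  have h2 := sum_sf Fq (n - 2)
  have hrange : n / 2 = (n - 2) / 2 + 1 := by omega
  have h3 : ∑ i ∈ Finset.range (n / 2),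
        (sfSet Fq (n - 2 * (i + 1))).ncard * Fintype.card Fq ^ (i + 1)
      = Fintype.card Fq * ∑ m ∈ Finset.range ((n - 2) / 2 + 1),
        (sfSet Fq ((n - 2) - 2 * m)).ncard * Fintype.card Fq ^ m := by
    rw [hrange, Finset.mul_sum]
    exact Finset.sum_congr rfl fun i _ => by
      rw [show n - 2 * (i + 1) = (n - 2) - 2 * i by omega, pow_succ]; ring
  rw [h3, h2] at h1
  have h4 : Fintype.card Fq * Fintype.card Fq ^ (n - 2) = Fintype.card Fq ^ (n - 1) := by
    rw [← pow_succ']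
    congr 1
    omega
  simp only [mul_zero, Nat.sub_zero, pow_zero, mul_one] at h1
  omega

end Count

section Main
variable (Fq : Type*) [Field Fq] [Fintype Fq]

lemma A_eq (j k : ℕ) (hkj : k ≤ j) :
    {p : Fq[X] × Fq[X] × Fq[X] | p.1.Monic ∧ p.1.natDegree = j ∧
        p.2.1.Monic ∧ p.2.2.Monic ∧ p.2.1 * p.2.2 = p.1 ^ 2 ∧ p.2.1.natDegree = k}
    = (fun p : Fq[X] × Fq[X] × Fq[X] =>
        (p.1 * p.2.1 * p.2.2, p.1 * p.2.1 ^ 2, p.1 * p.2.2 ^ 2)) ''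
      (⋃ m ∈ Finset.range (k / 2 + 1),
        sfSet Fq (k - 2 * m) ×ˢ (monicSet Fq m ×ˢ monicSet Fq (j - k + m))) := by
  classical
  ext ⟨f, f₁, f₂⟩
  simp only [Set.mem_image, Set.mem_iUnion, Set.mem_prod, Finset.mem_range, Set.mem_setOf_eq]
  constructor
  · rintro ⟨hfm, hfd, h1m, h2m, hmul, h1d⟩
    obtain ⟨a, b, ham, hbm, hsa, hab⟩ := exists_sf_decomp f₁.natDegree f₁ rfl h1m
    obtain ⟨c, d, hcm, hdm, hsc, hcd⟩ := exists_sf_decomp f₂.natDegree f₂ rfl h2m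
    have key : a * c * (b * d) ^ 2 = f ^ 2 := by rw [← hmul, hab, hcd]; ring
    have hac : a = c := by
      exact sf_eq_of_sq ham hcm (mul_ne_zero hbm.ne_zero hdm.ne_zero) hfm.ne_zero hsa hsc key
    subst hac
    have hfsq : (a * b * d) ^ 2 = f ^ 2 := by rw [← key]; ring
    have hfabd : a * b * d = f := monic_sq_inj ((ham.mul hbm).mul hdm) hfm hfsq
    have hdeg1 : a.natDegree + 2 * b.natDegree = k := by
      rw [← h1d, hab, natDegree_mul ham.ne_zero (pow_ne_zero 2 hbm.ne_zero), natDegree_pow]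
    have hdegf : a.natDegree + b.natDegree + d.natDegree = j := by
      rw [← hfd, ← hfabd, natDegree_mul (mul_ne_zero ham.ne_zero hbm.ne_zero) hdm.ne_zero,
        natDegree_mul ham.ne_zero hbm.ne_zero]
    refine ⟨(a, b, d), ⟨b.natDegree, by omega, ⟨ham, hsa, ?_⟩, ⟨hbm, rfl⟩, hdm, ?_⟩, ?_⟩
    · show a.natDegree = k - 2 * b.natDegree
      omega
    · show d.natDegree = j - k + b.natDegree
      omega
    · show (a * b * d, a * b ^ 2, a * d ^ 2) = (f, f₁, f₂)
      rw [hfabd, ← hab, ← hcd]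
  · rintro ⟨⟨a, b, c⟩, ⟨m, hm, ha, hb, hc⟩, heq⟩
    obtain ⟨ham, hsa, had⟩ := ha
    obtain ⟨hbm, hbd⟩ := hb
    obtain ⟨hcm, hcd⟩ := hc
    have had' : a.natDegree = k - 2 * m := had
    have hbd' : b.natDegree = m := hbd
    have hcd' : c.natDegree = j - k + m := hcd
    have h2mk : 2 * m ≤ k := by omega
    obtain ⟨hf, hf1, hf2⟩ : a * b * c = f ∧ a * b ^ 2 = f₁ ∧ a * c ^ 2 = f₂ := by
      simpa [Prod.ext_iff] using heq
    refine ⟨hf ▸ (ham.mul hbm).mul hcm, ?_, hf1 ▸ ham.mul (hbm.pow 2),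
      hf2 ▸ ham.mul (hcm.pow 2), ?_, ?_⟩
    · rw [← hf, natDegree_mul (mul_ne_zero ham.ne_zero hbm.ne_zero) hcm.ne_zero,
        natDegree_mul ham.ne_zero hbm.ne_zero, had', hbd', hcd']
      omega
    · rw [← hf, ← hf1, ← hf2]; ring
    · rw [← hf1, natDegree_mul ham.ne_zero (pow_ne_zero 2 hbm.ne_zero), natDegree_pow,
        had', hbd']
      omega

lemma phi_injOn (j k : ℕ) : Set.InjOn (fun p : Fq[X] × Fq[X] × Fq[X] =>
      (p.1 * p.2.1 * p.2.2, p.1 * p.2.1 ^ 2, p.1 * p.2.2 ^ 2))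
    (⋃ m ∈ Finset.range (k / 2 + 1),
      sfSet Fq (k - 2 * m) ×ˢ (monicSet Fq m ×ˢ monicSet Fq (j - k + m))) := by
  classical
  rintro ⟨a, b, c⟩ habc ⟨a', b', c'⟩ habc' h
  simp only [Set.mem_iUnion, Set.mem_prod, Finset.mem_range] at habc habc'
  obtain ⟨m, _, ⟨ham, hsa, _⟩, ⟨hbm, _⟩, hcm, _⟩ := habc
  obtain ⟨m', _, ⟨ham', hsa', _⟩, ⟨hbm', _⟩, hcm', _⟩ := habc'
  obtain ⟨h1, h2, h3⟩ : a * b * c = a' * b' * c' ∧ a * b ^ 2 = a' * b' ^ 2 ∧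
      a * c ^ 2 = a' * c' ^ 2 := by simpa [Prod.ext_iff] using h
  obtain ⟨haa, hbb⟩ := sf_decomp_unique ham hbm ham' hbm' hsa hsa' h2
  subst haa
  have hcc : c = c' := monic_sq_inj hcm hcm' (mul_left_cancel₀ ham.ne_zero h3)
  simp [hbb, hcc]

lemma A_card (j k : ℕ) (hkj : k ≤ j) :
    ({p : Fq[X] × Fq[X] × Fq[X] | p.1.Monic ∧ p.1.natDegree = j ∧
        p.2.1.Monic ∧ p.2.2.Monic ∧ p.2.1 * p.2.2 = p.1 ^ 2 ∧ p.2.1.natDegree = k}).ncard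
    = ∑ m ∈ Finset.range (k / 2 + 1), (sfSet Fq (k - 2 * m)).ncard *
        (Fintype.card Fq ^ m * Fintype.card Fq ^ (j - k + m)) := by
  classical
  rw [A_eq Fq j k hkj, Set.ncard_image_of_injOn (phi_injOn Fq j k),
    ncard_biUnion_range _ _
      (fun i => (sfSet_finite Fq _).prod ((monicSet_finite Fq _).prod (monicSet_finite Fq _))) ?_]
  · exact Finset.sum_congr rfl fun m _ => by
      rw [ncard_sprod, ncard_sprod, ncard_monicSet, ncard_monicSet]
  · intro i j' hij
    rw [Set.disjoint_left]
    rintro ⟨a, b, c⟩ h1 h2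
    exact hij (h1.2.1.2.symm.trans h2.2.1.2)

end Main

end CSF

/-- the number of pairs `(f, (f₁, f₂))` with `f` monic of degree `j`,
`f² = f₁ f₂` with `f₁, f₂` monic and `deg f₁ = k`, equals `q^j (1 + (1 - q⁻¹)⌊k/2⌋)`. -/
theorem count_square_factorizations (Fq : Type*) [Field Fq] [Fintype Fq] (q : ℕ)
    (hq : q = Fintype.card Fq) (j k : ℕ) (hkj : k ≤ j) :
    (({p : Fq[X] × Fq[X] × Fq[X] | p.1.Monic ∧ p.1.natDegree = j ∧
        p.2.1.Monic ∧ p.2.2.Monic ∧ p.2.1 * p.2.2 = p.1 ^ 2 ∧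
        p.2.1.natDegree = k} : Set (Fq[X] × Fq[X] × Fq[X])).ncard : ℝ)
      = (q : ℝ) ^ j * (1 + (1 - (q : ℝ)⁻¹) * (k / 2 : ℕ)) := by
  have hq1 : 1 ≤ Fintype.card Fq := Fintype.card_pos
  subst hq
  set q : ℕ := Fintype.card Fq with hqdef
  rw [CSF.A_card Fq j k hkj]
  push_cast
  rw [Finset.sum_range_succ]
  have htop : ((CSF.sfSet Fq (k - 2 * (k / 2))).ncard : ℝ) *
      ((q : ℝ) ^ (k / 2) * (q : ℝ) ^ (j - k + k / 2)) = (q : ℝ) ^ j := by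
    rcases Nat.even_or_odd k with he | ho
    · have hmod : k % 2 = 0 := Nat.even_iff.mp he
      rw [show k - 2 * (k / 2) = 0 by omega, CSF.ncard_sfSet_zero]
      push_cast
      rw [one_mul, ← pow_add]
      congr 1
      omega
    · have hmod : k % 2 = 1 := Nat.odd_iff.mp ho
      rw [show k - 2 * (k / 2) = 1 by omega, CSF.ncard_sfSet_one, ← hqdef, ← pow_add,
        show k / 2 + (j - k + k / 2) = j - 1 by omega, ← pow_succ',
        show j - 1 + 1 = j by omega]
  have hterm : ∀ m ∈ Finset.range (k / 2),
      ((CSF.sfSet Fq (k - 2 * m)).ncard : ℝ) * ((q : ℝ) ^ m * (q : ℝ) ^ (j - k + m))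
        = (q : ℝ) ^ j - (q : ℝ) ^ (j - 1) := by
    intro m hm
    rw [Finset.mem_range] at hm
    have h2 : 2 ≤ k - 2 * m := by omega
    have hca := CSF.ncard_sfSet_of_two_le Fq h2
    have hcast : ((CSF.sfSet Fq (k - 2 * m)).ncard : ℝ)
        = (q : ℝ) ^ (k - 2 * m) - (q : ℝ) ^ (k - 2 * m - 1) := by
      have := congrArg (Nat.cast (R := ℝ)) hca
      push_cast at this
      linarith
    rw [hcast, ← pow_add, sub_mul, ← pow_add, ← pow_add,
      show k - 2 * m + (m + (j - k + m)) = j by omega,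
      show k - 2 * m - 1 + (m + (j - k + m)) = j - 1 by omega]
  rw [Finset.sum_congr rfl hterm, Finset.sum_const, Finset.card_range, nsmul_eq_mul, htop]
  rcases Nat.eq_zero_or_pos (k / 2) with h0 | hpos
  · rw [h0]
    push_cast
    ring
  · have hj1 : 1 ≤ j := by omega
    have hq0 : (q : ℝ) ≠ 0 := Nat.cast_ne_zero.mpr (by omega)
    have hpow : (q : ℝ) ^ (j - 1) = (q : ℝ) ^ j * (q : ℝ)⁻¹ := by
      rw [eq_mul_inv_iff_mul_eq₀ hq0, ← pow_succ, show j - 1 + 1 = j by omega]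
    rw [hpow]
    ring
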